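/- Let r be an odd positive integer with r ≥ 3, and let n = 2·p₁^{α₁}·p₂^{α₂}⋯p_s^{α_s}, where p₁ < p₂ < ⋯ < p_s are odd primes and each α_i is a positive integer. Then n is a Schemmel nontotient number of order r if and only if n + r is composite and p_s − r ≠ 2·p₁^{α₁}⋯p_{s−1}^{α_{s−1}}. -/

import Mathlib

/-- The `r`-th Schemmel totient function: multiplicative, with
`S_r(p^a) = 0` if `p ≤ r` and `S_r(p^a) = p^(a-1) * (p - r)` if `p > r`. -/
def schemmel (r n : ℕ) : ℕ :=
  n.factorization.prod (fun p a => if p ≤ r then 0 else p ^ (a - 1) * (p - r))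

/-!
Every prime `q > r` is odd because `r ≥ 3`, so each prime power `q ^ b ∥ x` contributes the even
factor `q ^ (b - 1) * (q - r)` to `S_r(x)`. As `n ≡ 2 (mod 4)`, a preimage of `n` is a prime power
`q ^ b`. If `b = 1` then `q = n + r`. If `b ≥ 2` then `q ∣ n`; were `q` smaller than the largest
prime `p_s`, then `p_s` would divide `q - r < q`, so `q = p_s`, and since `q ∤ q - r`, comparing
`q`-adic valuations in `q ^ (b - 1) * (q - r) = n` leaves `q - r = n / p_s ^ α_s`.
-/

theorem Nat.Prime.eq_of_pow_mul_eq_pow_mul {q k l u v : ℕ} (hq : q.Prime) (hu : ¬ q ∣ u)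
    (hv : ¬ q ∣ v) (h : q ^ k * u = q ^ l * v) : k = l ∧ u = v := by
  have hu0 : u ≠ 0 := by rintro rfl; exact hu (dvd_zero q)
  have hv0 : v ≠ 0 := by rintro rfl; exact hv (dvd_zero q)
  have hval := congrArg (fun n => n.factorization q) h
  simp only [Nat.factorization_mul (pow_ne_zero _ hq.ne_zero) hu0,
    Nat.factorization_mul (pow_ne_zero _ hq.ne_zero) hv0, Finsupp.add_apply,
    hq.factorization_pow, Finsupp.single_eq_same, Nat.factorization_eq_zero_of_not_dvd hu,
    Nat.factorization_eq_zero_of_not_dvd hv] at hval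
  subst hval
  exact ⟨rfl, Nat.eq_of_mul_eq_mul_left (pow_pos hq.pos k) h⟩

theorem Nat.Prime.exists_eq_of_dvd_prod_pow {ι : Type*} [Fintype ι] {p a : ι → ℕ}
    (hp : ∀ i, (p i).Prime) {q : ℕ} (hq : q.Prime) (h : q ∣ ∏ i, p i ^ a i) :
    ∃ i, q = p i := by
  obtain ⟨i, -, hi⟩ := hq.prime.exists_mem_finset_dvd h
  exact ⟨i, (Nat.prime_dvd_prime_iff_eq hq (hp i)).mp (hq.dvd_of_dvd_pow hi)⟩

section schemmel

variable {r : ℕ}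

theorem schemmel_one : schemmel r 1 = 1 := by
  simp [schemmel]

theorem schemmel_prime_pow {q b : ℕ} (hq : q.Prime) (hb : b ≠ 0) :
    schemmel r (q ^ b) = if q ≤ r then 0 else q ^ (b - 1) * (q - r) := by
  rw [schemmel, hq.factorization_pow, Finsupp.prod, Finsupp.support_single _ hb,
    Finset.prod_singleton, Finsupp.single_eq_same]

theorem schemmel_prime {q : ℕ} (hq : q.Prime) (hrq : r < q) : schemmel r q = q - r := by
  simpa [hrq.not_ge] using schemmel_prime_pow (r := r) hq one_ne_zero

theorem two_pow_card_primeFactors_dvd_schemmel (hr : Odd r) (hr1 : 1 < r) (x : ℕ) :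
    2 ^ x.primeFactors.card ∣ schemmel r x := by
  rw [schemmel, Finsupp.prod, Nat.support_factorization, ← Finset.prod_const]
  refine Finset.prod_dvd_prod_of_dvd _ _ fun q hq => ?_
  split_ifs with hqr
  · exact dvd_zero 2
  · have hq_odd : Odd q := (Nat.prime_of_mem_primeFactors hq).odd_of_ne_two (by omega)
    exact Dvd.dvd.mul_left (Nat.Odd.sub_odd hq_odd hr).two_dvd _

theorem exists_prime_pow_of_schemmel_eq_two_mul (hr : Odd r) (hr1 : 1 < r) {x m : ℕ}
    (hx : 0 < x) (hm : Odd m) (h : schemmel r x = 2 * m) :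
    ∃ q b, q.Prime ∧ r < q ∧ q ^ b * (q - r) = 2 * m := by
  have hcard_le : x.primeFactors.card ≤ 1 := by
    by_contra! hcard
    have h4 : 2 ^ 2 ∣ 2 * m :=
      h ▸ (pow_dvd_pow 2 hcard).trans (two_pow_card_primeFactors_dvd_schemmel hr hr1 x)
    obtain ⟨k, rfl⟩ := hm
    omega
  have hcard_ne : x.primeFactors.card ≠ 0 := by
    intro hcard
    obtain rfl : x = 1 := by simpa [hx.ne'] using hcard
    rw [schemmel_one] at h
    omega
  obtain ⟨q, b, hq, hb, rfl⟩ :=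
    (isPrimePow_nat_iff x).mp (isPrimePow_iff_card_primeFactors_eq_one.mpr (by omega))
  rw [schemmel_prime_pow hq hb.ne'] at h
  split_ifs at h with hqr
  · exact absurd h.symm (by have := hm.pos; omega)
  · exact ⟨q, b - 1, hq, not_le.mp hqr, h⟩

end schemmel

section TwoMulProdPrimePow

variable {s : ℕ} {p a : Fin (s + 1) → ℕ}

theorem prime_eq_last_of_pow_mul_sub_eq (hp : ∀ i, (p i).Prime) (hmono : StrictMono p)
    (ha : ∀ i, 0 < a i) {r q b : ℕ} (hq : q.Prime) (hq2 : q ≠ 2) (hrq : r < q)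
    (h : q ^ (b + 1) * (q - r) = 2 * ∏ i, p i ^ a i) : q = p (Fin.last s) := by
  have hq_dvd : q ∣ ∏ i, p i ^ a i := by
    have : q ∣ 2 * ∏ i, p i ^ a i := h ▸ (dvd_pow_self q b.succ_ne_zero).mul_right _
    exact (Nat.Coprime.dvd_mul_left
      ((Nat.coprime_primes hq Nat.prime_two).mpr hq2)).mp this
  obtain ⟨j, rfl⟩ := Nat.Prime.exists_eq_of_dvd_prod_pow hp hq hq_dvd
  refine (hmono.monotone (Fin.le_last j)).antisymm (not_lt.mp fun hlt => ?_)
  -- `p (Fin.last s)` divides `n` and is coprime to `p j ^ (b + 1)`, so it divides `p j - r < p j`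
  have hlast_dvd : p (Fin.last s) ∣ p j ^ (b + 1) * (p j - r) :=
    h ▸ dvd_mul_of_dvd_right ((dvd_pow_self _ (ha _).ne').trans
      (Finset.dvd_prod_of_mem (fun i => p i ^ a i) (Finset.mem_univ _))) 2
  have hcop : (p (Fin.last s)).Coprime (p j ^ (b + 1)) :=
    ((Nat.coprime_primes (hp _) (hp j)).mpr hlt.ne').pow_right _
  have := Nat.le_of_dvd (by omega) (hcop.dvd_of_dvd_mul_left hlast_dvd)
  omega

theorem last_sub_eq_of_pow_mul_sub_eq (hp : ∀ i, (p i).Prime) (hmono : StrictMono p)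
    (ha : ∀ i, 0 < a i) {r q b : ℕ} (hr : 0 < r) (hq : q.Prime) (hq2 : q ≠ 2) (hrq : r < q)
    (h : q ^ (b + 1) * (q - r) = 2 * ∏ i, p i ^ a i) :
    p (Fin.last s) - r = 2 * ∏ i : Fin s, p i.castSucc ^ a i.castSucc := by
  have hq_last := prime_eq_last_of_pow_mul_sub_eq hp hmono ha hq hq2 hrq h
  rw [Fin.prod_univ_castSucc, ← hq_last] at h
  rw [← hq_last]
  have hq_not_dvd_rest : ¬ q ∣ 2 * ∏ i : Fin s, p i.castSucc ^ a i.castSucc := by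
    rw [hq.prime.dvd_mul, not_or, hq.prime.dvd_finsetProd_iff]
    refine ⟨fun h2 => hq2 ((Nat.prime_dvd_prime_iff_eq hq Nat.prime_two).mp h2), ?_⟩
    rintro ⟨i, -, hi⟩
    have := (Nat.prime_dvd_prime_iff_eq hq (hp _)).mp (hq.dvd_of_dvd_pow hi)
    exact (hmono (Fin.castSucc_lt_last i)).ne' (hq_last ▸ this)
  have hq_not_dvd_sub : ¬ q ∣ q - r := Nat.not_dvd_of_pos_of_lt (by omega) (by omega)
  have h' : q ^ (b + 1) * (q - r) =
      q ^ a (Fin.last s) * (2 * ∏ i : Fin s, p i.castSucc ^ a i.castSucc) := by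
    rw [h]; ring
  exact (hq.eq_of_pow_mul_eq_pow_mul hq_not_dvd_sub hq_not_dvd_rest h').2

end TwoMulProdPrimePow

theorem nontotient_iff_of_two_mul (r : ℕ) (hrodd : Odd r) (hr3 : 3 ≤ r) (s : ℕ)
    (p a : Fin (s + 1) → ℕ) (hp : ∀ i, (p i).Prime) (hodd : ∀ i, Odd (p i))
    (hmono : StrictMono p) (ha : ∀ i, 0 < a i) (n : ℕ)
    (hn : n = 2 * ∏ i, p i ^ a i) :
    (¬ ∃ x : ℕ, 0 < x ∧ schemmel r x = n) ↔
      (¬ (n + r).Prime ∧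
        p (Fin.last s) - r ≠ 2 * ∏ i : Fin s, p i.castSucc ^ a i.castSucc) := by
  rw [← not_or, not_iff_not]
  have hm : Odd (∏ i, p i ^ a i) :=
    Finset.prod_induction _ Odd (fun _ _ => Odd.mul) odd_one fun i _ => (hodd i).pow
  have hn0 : 0 < n := hn ▸ Nat.mul_pos two_pos hm.pos
  constructor
  · rintro ⟨x, hx, hxn⟩
    obtain ⟨q, b, hq, hrq, hqn⟩ :=
      exists_prime_pow_of_schemmel_eq_two_mul hrodd (by omega) hx hm (hxn.trans hn)
    rcases b with _ | b
    · rw [pow_zero, one_mul, ← hn] at hqn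
      exact .inl ((show n + r = q by omega) ▸ hq)
    · exact .inr (last_sub_eq_of_pow_mul_sub_eq hp hmono ha (by omega) hq (by omega) hrq hqn)
  · rintro (hprime | hlast)
    · exact ⟨n + r, by omega, by rw [schemmel_prime hprime (by omega)]; omega⟩
    · have hrq : r < p (Fin.last s) := by
        have : 0 < ∏ i : Fin s, p i.castSucc ^ a i.castSucc :=
          Finset.prod_pos fun i _ => pow_pos (hp _).pos _
        omega
      refine ⟨p (Fin.last s) ^ (a (Fin.last s) + 1), pow_pos (hp _).pos _, ?_⟩
      rw [schemmel_prime_pow (hp _) (by omega), if_neg hrq.not_ge, Nat.add_sub_cancel, hlast, hn,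
        Fin.prod_univ_castSucc]
      ring
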